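/- arXiv:2106.10387 — 2 statements merged into one kernel-verified Lean document; each statement's English description precedes it below -/
import Mathlib

section
/- Fix an integer x ≥ 1, and for each h > 0 let (Δ_0^h,…,Δ_m^h) be a random vector with the Dirichlet-multinomial distribution DM(x; cπ_0(h), cπ_1(h),…,cπ_m(h)). Let (k_0,…,k_m) be nonnegative integers with Σ_{i=0}^m k_i = x and set S = {i ∈ {1,…,m} : k_i ≥ 1}. If |S| ≥ 2, then P((Δ_0^h,…,Δ_m^h) = (k_0,…,k_m)) = o(h) as h → 0+. If S = {i} for a single index i with k_i = k ≥ 1 (so k_0 = x − k), then P((Δ_0^h,…,Δ_m^h) = (k_0,…,k_m)) = c·C(x,k)·[Γ(k)·Γ(x−k+c)/Γ(x+c)]·r_i(t)·h + o(h) as h → 0+. -/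
open scoped BigOperators
open Filter Topology Asymptotics

/-- The pmf of the Dirichlet-multinomial distribution `DM(x; α_0,…,α_m)` on vectors
`k : Fin (m+1) → ℕ` with `∑ k = x`:
`P(k) = [x!/∏ k_i!] · [Γ(∑α)/∏Γ(α_i)] · [∏Γ(k_i+α_i)] / Γ(x+∑α)`. -/
noncomputable def dmPmf (m x : ℕ) (α : Fin (m + 1) → ℝ) (k : Fin (m + 1) → ℕ) : ℝ :=
  ((x.factorial : ℝ) / ∏ i, ((k i).factorial : ℝ)) *
    (Real.Gamma (∑ i, α i) / ∏ i, Real.Gamma (α i)) *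
    (∏ i, Real.Gamma ((k i : ℝ) + α i)) / Real.Gamma ((x : ℝ) + ∑ i, α i)

/-- Expectation of `f(Δ_0,…,Δ_m)` under `DM(x; α)`: the sum of `f(k) · P(k)` over all
nonnegative integer vectors `k` with `∑ k = x`. -/
noncomputable def dmExp (m x : ℕ) (α : Fin (m + 1) → ℝ) (f : (Fin (m + 1) → ℕ) → ℝ) : ℝ :=
  ∑ k ∈ (Fintype.piFinset fun _ : Fin (m + 1) => Finset.range (x + 1)).filter
      (fun k => ∑ j, k j = x), f k * dmPmf m x α k

/-- `π_i(h) = (1 − exp(−∑_j ∫_t^{t+h} r_j(s) ds)) · r_i(t)/∑_j r_j(t)`, for `i = 1,…,m`. -/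
noncomputable def pmain (m : ℕ) (r : Fin m → ℝ → ℝ) (t h : ℝ) (i : Fin m) : ℝ :=
  (1 - Real.exp (-(∑ j, ∫ s in t..(t + h), r j s))) * r i t / ∑ j, r j t

/-- The Dirichlet parameter vector `(cπ_0(h), cπ_1(h),…,cπ_m(h))`, where
`π_0(h) = 1 − ∑_{i=1}^m π_i(h)`; the index `0 : Fin (m+1)` carries `cπ_0(h)`. -/
noncomputable def alphaVec (m : ℕ) (r : Fin m → ℝ → ℝ) (t c h : ℝ) : Fin (m + 1) → ℝ :=
  Fin.cons (c * (1 - ∑ i, pmain m r t h i)) (fun i => c * pmain m r t h i)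

/-! For `h > 0` every Dirichlet parameter `α_j(h)` is positive, and `Γ(n + α) = (α)_n Γ(α)` with
`(α)_n = α (α + 1) ⋯ (α + n - 1)` the rising factorial, so `P(Δ^h = k)` is a constant multiple of
`∏_j (α_j(h))_{k_j}`, a product of functions differentiable in `h`. At `h = 0` the parameter
vector is `(c, 0, …, 0)`, and `(α)_n` vanishes at `α = 0` for `n ≥ 1`, with derivative
`(n - 1)! = Γ(n)` there. If two indices `i ≥ 1` have `k_i ≥ 1`, the product has a double zero at
`h = 0` and is `o(h)`. If only `i` does, its derivative at `0` is `(c)_{k_0} Γ(k_i) c r_i(t)`,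
and `(c)_{k_0} Γ(c) = Γ(x - k_i + c)` turns the constant into the stated one. -/

open Polynomial Real

theorem Real.Gamma_natCast_add_eq_ascPochhammer_eval_mul (n : ℕ) {a : ℝ}
    (ha : ∀ j : ℕ, a ≠ -j) :
    Gamma (n + a) = (ascPochhammer ℝ n).eval a * Gamma a := by
  induction n with
  | zero => simp
  | succ n ih =>
    have hne : (n : ℝ) + a ≠ 0 := fun h => ha n (by linarith)
    rw [Nat.cast_succ, add_right_comm, Gamma_add_one hne, ih, ascPochhammer_succ_eval]
    ring

theorem Real.Gamma_natCast_add_eq_ascPochhammer_eval_mul_of_pos (n : ℕ) {a : ℝ} (ha : 0 < a) :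
    Gamma (n + a) = (ascPochhammer ℝ n).eval a * Gamma a :=
  Gamma_natCast_add_eq_ascPochhammer_eval_mul n fun j hj => by
    linarith [(j.cast_nonneg : (0 : ℝ) ≤ j)]

theorem dmPmf_eq_prod_ascPochhammer (m x : ℕ) {α : Fin (m + 1) → ℝ} (hα : ∀ i, 0 < α i)
    (k : Fin (m + 1) → ℕ) :
    dmPmf m x α k = (x.factorial / ∏ i, ((k i).factorial : ℝ)) *
      (Gamma (∑ i, α i) / Gamma (x + ∑ i, α i)) *
      ∏ i, (ascPochhammer ℝ (k i)).eval (α i) := by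
  have hΓ i : Gamma (α i) ≠ 0 := (Gamma_pos_of_pos (hα i)).ne'
  rw [dmPmf, Finset.prod_congr rfl fun i _ =>
    Gamma_natCast_add_eq_ascPochhammer_eval_mul_of_pos (k i) (hα i), Finset.prod_mul_distrib]
  field_simp [Finset.prod_ne_zero_iff.2 fun i _ => hΓ i]

theorem hasDerivAt_ascPochhammer_eval_zero {n : ℕ} (hn : 1 ≤ n) :
    HasDerivAt (fun a => (ascPochhammer ℝ n).eval a) (Gamma n) 0 := by
  obtain ⟨n, rfl⟩ := Nat.exists_eq_add_of_le' hn
  refine ((ascPochhammer ℝ (n + 1)).hasDerivAt 0).congr_deriv ?_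
  rw [Nat.cast_succ, Gamma_nat_eq_factorial, ascPochhammer_succ_left]
  simp

theorem hasDerivAt_integral_add_right {f : ℝ → ℝ} (hf : Continuous f) (t : ℝ) :
    HasDerivAt (fun h => ∫ s in t..t + h, f s) (f t) 0 := by
  have hF := intervalIntegral.integral_hasDerivAt_right (hf.intervalIntegrable t (t + 0))
    hf.stronglyMeasurable.stronglyMeasurableAtFilter hf.continuousAt
  simpa using hF.comp_const_add t 0

theorem hasDerivAt_finsetProd_eq_zero_of_two_zeros {ι 𝕜 : Type*} [DecidableEq ι]
    [NontriviallyNormedField 𝕜] {u : Finset ι} {f : ι → 𝕜 → 𝕜} {x : 𝕜}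
    (hf : ∀ i ∈ u, DifferentiableAt 𝕜 (f i) x) {a b : ι} (ha : a ∈ u) (hb : b ∈ u)
    (hab : a ≠ b) (hfa : f a x = 0) (hfb : f b x = 0) :
    HasDerivAt (fun y => ∏ i ∈ u, f i y) 0 x := by
  refine (HasDerivAt.fun_finsetProd fun i hi => (hf i hi).hasDerivAt).congr_deriv ?_
  refine Finset.sum_eq_zero fun i _ => ?_
  obtain ⟨j, hj, hfj⟩ : ∃ j ∈ u.erase i, f j x = 0 := by
    by_cases hia : i = a
    · exact ⟨b, Finset.mem_erase.2 ⟨hia ▸ hab.symm, hb⟩, hfb⟩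
    · exact ⟨a, Finset.mem_erase.2 ⟨Ne.symm hia, ha⟩, hfa⟩
  rw [Finset.prod_eq_zero hj hfj, zero_smul]

theorem isLittleO_sub_const_mul_of_hasDerivAt {f g : ℝ → ℝ} {K D : ℝ}
    (hfg : ∀ h > 0, f h = K * g h) (hg : HasDerivAt g D 0) (hg0 : g 0 = 0) :
    (fun h => f h - K * D * h) =o[𝓝[>] 0] fun h => h := by
  have hlin := (hasDerivAt_iff_isLittleO.1 hg).const_mul_left K
  simp only [hg0, sub_zero, smul_eq_mul] at hlin
  refine (hlin.mono nhdsWithin_le_nhds).congr' ?_ EventuallyEq.rfl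
  filter_upwards [self_mem_nhdsWithin] with h hh
  rw [hfg h hh]
  ring

theorem choose_mul_Gamma_ratio_eq {a b x : ℕ} (hab : a + b = x) {c : ℝ} (hc : 0 < c)
    (ρ : ℝ) :
    x.factorial / ((a.factorial : ℝ) * b.factorial) * (Gamma c / Gamma (x + c)) *
        ((ascPochhammer ℝ a).eval c * (Gamma b * (c * ρ))) =
      c * (x.choose b : ℝ) * (Gamma b * Gamma ((x : ℝ) - b + c) / Gamma (x + c)) * ρ := by
  have hΓ : Gamma ((x : ℝ) - b + c) = (ascPochhammer ℝ a).eval c * Gamma c := by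
    rw [← Gamma_natCast_add_eq_ascPochhammer_eval_mul_of_pos a hc, ← hab, Nat.cast_add,
      add_sub_cancel_right]
  have hchoose : (x.choose b : ℝ) * b.factorial * a.factorial = x.factorial := by
    have := Nat.choose_mul_factorial_mul_factorial (show b ≤ x by omega)
    rw [show x - b = a by omega] at this
    exact_mod_cast this
  have hΓc := (Gamma_pos_of_pos hc).ne'
  rw [hΓ, ← hchoose]
  field_simp

section alphaVec

variable {m : ℕ} {r : Fin m → ℝ → ℝ} {t c : ℝ}

theorem sum_alphaVec (h : ℝ) : ∑ j, alphaVec m r t c h j = c := by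
  simp only [alphaVec, Fin.sum_univ_succ, Fin.cons_zero, Fin.cons_succ, ← Finset.mul_sum]
  ring

theorem alphaVec_step_zero : alphaVec m r t c 0 = Fin.cons c 0 := by
  ext j
  cases j using Fin.cases <;> simp [alphaVec, pmain]

theorem eval_ascPochhammer_alphaVec_step_zero_succ {n : ℕ} (hn : 1 ≤ n) (i : Fin m) :
    (ascPochhammer ℝ n).eval (alphaVec m r t c 0 i.succ) = 0 := by
  rw [alphaVec_step_zero, Fin.cons_succ, Pi.zero_apply, ascPochhammer_eval_zero,
    if_neg (by omega)]

theorem sum_pmain (hR : ∑ j, r j t ≠ 0) (h : ℝ) :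
    ∑ i, pmain m r t h i = 1 - exp (-∑ j, ∫ s in t..t + h, r j s) := by
  simp only [pmain, ← Finset.sum_div, ← Finset.mul_sum]
  field_simp

theorem alphaVec_apply_zero (hR : ∑ j, r j t ≠ 0) (h : ℝ) :
    alphaVec m r t c h 0 = c * exp (-∑ j, ∫ s in t..t + h, r j s) := by
  rw [alphaVec, Fin.cons_zero, sum_pmain hR]
  ring

theorem hasDerivAt_pmain (hr_cont : ∀ j, Continuous (r j)) (hR : ∑ j, r j t ≠ 0)
    (i : Fin m) : HasDerivAt (fun h => pmain m r t h i) (r i t) 0 := by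
  have hA : HasDerivAt (fun h => ∑ j, ∫ s in t..t + h, r j s) (∑ j, r j t) 0 :=
    HasDerivAt.fun_sum fun j _ => hasDerivAt_integral_add_right (hr_cont j) t
  refine (((hA.neg.exp.const_sub 1).mul_const (r i t)).div_const (∑ j, r j t)).congr_deriv ?_
  simp [hR]

theorem hasDerivAt_alphaVec_succ (hr_cont : ∀ j, Continuous (r j)) (hR : ∑ j, r j t ≠ 0)
    (i : Fin m) : HasDerivAt (fun h => alphaVec m r t c h i.succ) (c * r i t) 0 :=
  (hasDerivAt_pmain hr_cont hR i).const_mul c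

theorem differentiableAt_eval_alphaVec (hr_cont : ∀ j, Continuous (r j)) (hR : ∑ j, r j t ≠ 0)
    (p : ℝ[X]) (j : Fin (m + 1)) :
    DifferentiableAt ℝ (fun h => p.eval (alphaVec m r t c h j)) 0 := by
  have hp i := (hasDerivAt_pmain hr_cont hR i).differentiableAt
  refine p.differentiable.differentiableAt.comp (f := fun h => alphaVec m r t c h j) 0 ?_
  cases j using Fin.cases with
  | zero => exact ((DifferentiableAt.fun_sum fun i _ => hp i).const_sub 1).const_mul c
  | succ i => exact (hp i).const_mul c

section

variable [Nonempty (Fin m)]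

theorem sum_rates_pos (hr_pos : ∀ j s, 0 < r j s) (s : ℝ) : 0 < ∑ j, r j s :=
  Finset.sum_pos (fun j _ => hr_pos j s) Finset.univ_nonempty

theorem sum_integral_rates_pos (hr_cont : ∀ j, Continuous (r j)) (hr_pos : ∀ j s, 0 < r j s)
    {h : ℝ} (hh : 0 < h) : 0 < ∑ j, ∫ s in t..t + h, r j s :=
  Finset.sum_pos (fun j _ => intervalIntegral.intervalIntegral_pos_of_pos
    ((hr_cont j).intervalIntegrable _ _) (hr_pos j) (by linarith)) Finset.univ_nonempty

theorem pmain_pos (hr_cont : ∀ j, Continuous (r j)) (hr_pos : ∀ j s, 0 < r j s)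
    {h : ℝ} (hh : 0 < h) (i : Fin m) : 0 < pmain m r t h i := by
  have hexp := exp_lt_one_iff.2 <| neg_lt_zero.2 <|
    sum_integral_rates_pos (t := t) hr_cont hr_pos hh
  exact div_pos (mul_pos (by linarith) (hr_pos i t)) (sum_rates_pos hr_pos t)

theorem alphaVec_pos (hr_cont : ∀ j, Continuous (r j)) (hr_pos : ∀ j s, 0 < r j s)
    (hc : 0 < c) {h : ℝ} (hh : 0 < h) (j : Fin (m + 1)) : 0 < alphaVec m r t c h j := by
  cases j using Fin.cases with
  | zero =>
    rw [alphaVec_apply_zero (sum_rates_pos hr_pos t).ne']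
    positivity
  | succ i => exact mul_pos hc (pmain_pos hr_cont hr_pos hh i)

theorem dmPmf_alphaVec_eq (hr_cont : ∀ j, Continuous (r j)) (hr_pos : ∀ j s, 0 < r j s)
    (hc : 0 < c) {h : ℝ} (hh : 0 < h) (x : ℕ) (k : Fin (m + 1) → ℕ) :
    dmPmf m x (alphaVec m r t c h) k = (x.factorial / ∏ j, ((k j).factorial : ℝ)) *
      (Gamma c / Gamma (x + c)) *
      ∏ j, (ascPochhammer ℝ (k j)).eval (alphaVec m r t c h j) := by
  rw [dmPmf_eq_prod_ascPochhammer m x (alphaVec_pos hr_cont hr_pos hc hh), sum_alphaVec]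

end

theorem isLittleO_dmPmf_alphaVec_of_two_succ (hr_cont : ∀ j, Continuous (r j))
    (hr_pos : ∀ j s, 0 < r j s) (hc : 0 < c) (x : ℕ) {k : Fin (m + 1) → ℕ} {p q : Fin m}
    (hpq : p ≠ q) (hp : 1 ≤ k p.succ) (hq : 1 ≤ k q.succ) :
    (fun h => dmPmf m x (alphaVec m r t c h) k) =o[𝓝[>] 0] fun h => h := by
  have : Nonempty (Fin m) := ⟨p⟩
  have hp0 := eval_ascPochhammer_alphaVec_step_zero_succ (r := r) (t := t) (c := c) hp p
  have hD := hasDerivAt_finsetProd_eq_zero_of_two_zeros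
    (f := fun j h => (ascPochhammer ℝ (k j)).eval (alphaVec m r t c h j))
    (fun j _ => differentiableAt_eval_alphaVec hr_cont (sum_rates_pos hr_pos t).ne' _ j)
    (Finset.mem_univ p.succ) (Finset.mem_univ q.succ) ((Fin.succ_injective m).ne hpq)
    hp0 (eval_ascPochhammer_alphaVec_step_zero_succ hq q)
  simpa using isLittleO_sub_const_mul_of_hasDerivAt
    (fun h hh => dmPmf_alphaVec_eq hr_cont hr_pos hc hh x k) hD
    (Finset.prod_eq_zero (Finset.mem_univ p.succ) hp0)

theorem isLittleO_dmPmf_alphaVec_sub_linear_of_succ (hr_cont : ∀ j, Continuous (r j))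
    (hr_pos : ∀ j s, 0 < r j s) (hc : 0 < c) {x : ℕ} {k : Fin (m + 1) → ℕ}
    (hsum : ∑ j, k j = x) {i : Fin m} (hk : ∀ j, j ≠ i → k j.succ = 0)
    (hki : 1 ≤ k i.succ) :
    (fun h => dmPmf m x (alphaVec m r t c h) k - c * (x.choose (k i.succ) : ℝ) *
        (Gamma (k i.succ) * Gamma ((x : ℝ) - k i.succ + c) / Gamma (x + c)) *
          r i t * h) =o[𝓝[>] 0] fun h => h := by
  have : Nonempty (Fin m) := ⟨i⟩
  have hR := (sum_rates_pos hr_pos t).ne'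
  have hsupp : ∀ j, j ≠ 0 ∧ j ≠ i.succ → k j = 0 := by
    rintro j ⟨hj0, hji⟩
    obtain ⟨j, rfl⟩ := Fin.exists_succ_eq.2 hj0
    exact hk j fun hj => hji (hj ▸ rfl)
  have hprod (f : Fin (m + 1) → ℝ) (hf : ∀ j, k j = 0 → f j = 1) :
      ∏ j, f j = f 0 * f i.succ :=
    Fintype.prod_eq_mul 0 i.succ (Fin.succ_ne_zero i).symm fun j hj => hf j (hsupp j hj)
  have hk0 : k 0 + k i.succ = x :=
    hsum ▸ (Fintype.sum_eq_add 0 i.succ (Fin.succ_ne_zero i).symm hsupp).symm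
  have hFi0 := eval_ascPochhammer_alphaVec_step_zero_succ (r := r) (t := t) (c := c) hki i
  have hD : HasDerivAt (fun h => (ascPochhammer ℝ (k 0)).eval (alphaVec m r t c h 0) *
      (ascPochhammer ℝ (k i.succ)).eval (alphaVec m r t c h i.succ))
      ((ascPochhammer ℝ (k 0)).eval c * (Gamma (k i.succ) * (c * r i t))) 0 := by
    have hDi := (hasDerivAt_ascPochhammer_eval_zero hki).comp_of_eq 0
      (hasDerivAt_alphaVec_succ (c := c) hr_cont hR i) (by simp [alphaVec_step_zero])
    have hD0 :=
      (differentiableAt_eval_alphaVec (c := c) hr_cont hR (ascPochhammer ℝ (k 0)) 0).hasDerivAt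
    refine (hD0.mul hDi).congr_deriv ?_
    rw [Function.comp_apply, hFi0, mul_zero, zero_add, alphaVec_step_zero, Fin.cons_zero]
  have hKD := isLittleO_sub_const_mul_of_hasDerivAt
    (fun h hh => (dmPmf_alphaVec_eq hr_cont hr_pos hc hh x k).trans
      (by rw [hprod _ fun j hj => by simp [hj], hprod _ fun j hj => by simp [hj]]))
    hD (by rw [hFi0, mul_zero])
  rwa [choose_mul_Gamma_ratio_eq hk0 hc] at hKD

end alphaVec

theorem dm_transition_rates_general
    (m : ℕ) (r : Fin m → ℝ → ℝ)
    (hr_cont : ∀ i, Continuous (r i)) (hr_pos : ∀ i s, 0 < r i s)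
    (t c : ℝ) (hc : 0 < c) (x : ℕ)
    (k : Fin (m + 1) → ℕ) (hsum : ∑ j, k j = x) :
    (2 ≤ (Finset.univ.filter fun i : Fin m => 1 ≤ k i.succ).card →
      (fun h : ℝ => dmPmf m x (alphaVec m r t c h) k) =o[𝓝[>] (0 : ℝ)] (fun h => h)) ∧
    (∀ i : Fin m, (Finset.univ.filter fun i' : Fin m => 1 ≤ k i'.succ) = {i} →
      (fun h : ℝ => dmPmf m x (alphaVec m r t c h) k
          - c * (x.choose (k i.succ) : ℝ) *
              (Real.Gamma (k i.succ : ℝ) * Real.Gamma ((x : ℝ) - (k i.succ : ℝ) + c)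
                / Real.Gamma ((x : ℝ) + c)) * r i t * h)
        =o[𝓝[>] (0 : ℝ)] (fun h => h)) := by
  constructor
  · intro hS
    obtain ⟨p, hp, q, hq, hpq⟩ := Finset.one_lt_card.1 hS
    exact isLittleO_dmPmf_alphaVec_of_two_succ hr_cont hr_pos hc x hpq
      (Finset.mem_filter.1 hp).2 (Finset.mem_filter.1 hq).2
  · intro i hS
    have hS' := Finset.eq_singleton_iff_unique_mem.1 hS
    refine isLittleO_dmPmf_alphaVec_sub_linear_of_succ hr_cont hr_pos hc hsum
      (fun j hj => ?_) (by simpa using hS'.1)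
    by_contra hkj
    exact hj (hS'.2 j (by simpa using Nat.one_le_iff_ne_zero.2 hkj))

/-- for `(Δ_0^h,…,Δ_m^h) ~ DM(x; cπ_0(h),…,cπ_m(h))` and a fixed vector
`(k_0,…,k_m)` with `∑ k_i = x`, let `S = {i ∈ {1,…,m} : k_i ≥ 1}`.  If `|S| ≥ 2` then
`P(Δ^h = k) = o(h)`; if `S = {i}` with `k_i = k ≥ 1` then
`P(Δ^h = k) = c·C(x,k)·[Γ(k)Γ(x−k+c)/Γ(x+c)]·r_i(t)·h + o(h)` as `h → 0+`. -/
theorem dm_transition_rates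
    (m : ℕ) (hm : 1 ≤ m) (r : Fin m → ℝ → ℝ)
    (hr_cont : ∀ i, Continuous (r i)) (hr_pos : ∀ i s, 0 < r i s)
    (t c : ℝ) (hc : 0 < c) (x : ℕ) (hx : 1 ≤ x)
    (k : Fin (m + 1) → ℕ) (hsum : ∑ j, k j = x) :
    (2 ≤ (Finset.univ.filter fun i : Fin m => 1 ≤ k i.succ).card →
      (fun h : ℝ => dmPmf m x (alphaVec m r t c h) k) =o[𝓝[>] (0 : ℝ)] (fun h => h)) ∧
    (∀ i : Fin m, (Finset.univ.filter fun i' : Fin m => 1 ≤ k i'.succ) = {i} →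
      (fun h : ℝ => dmPmf m x (alphaVec m r t c h) k
          - c * (x.choose (k i.succ) : ℝ) *
              (Real.Gamma (k i.succ : ℝ) * Real.Gamma ((x : ℝ) - (k i.succ : ℝ) + c)
                / Real.Gamma ((x : ℝ) + c)) * r i t * h)
        =o[𝓝[>] (0 : ℝ)] (fun h => h)) :=
  dm_transition_rates_general m r hr_cont hr_pos t c hc x k hsum
end

section
/- Fix an integer m₁ ≥ 2 and integers x_1,…,x_{m₁} ≥ 1. For each h > 0 let Π_h be drawn from the Beta(cπ(h), c(1−π(h))) distribution and, conditionally on Π_h, let Δ_1^h,…,Δ_{m₁}^h be independent with Δ_i^h ~ Binomial(x_i, Π_h). Then for all i ≠ j, lim_{h→0+} h⁻¹·Cov(Δ_i^h, Δ_j^h) = x_i·x_j·r(t)/(c+1), which is strictly positive. -/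
open scoped BigOperators
open Filter Topology Asymptotics

/-- The Beta function `B(a,b) = Γ(a)Γ(b)/Γ(a+b)`. -/
noncomputable def betaFn (a b : ℝ) : ℝ := Real.Gamma a * Real.Gamma b / Real.Gamma (a + b)

/-- The joint pmf of `(Δ_1,…,Δ_m)` where, conditionally on `Π ~ Beta(α,β)`, the `Δ_i` are
independent with `Δ_i ~ Binomial(x_i, Π)`:
`P(Δ = k) = (∏ C(x_i,k_i)) · B(∑k+α, ∑x−∑k+β)/B(α,β)`. -/
noncomputable def mbbPmf (m : ℕ) (x : Fin m → ℕ) (α β : ℝ) (k : Fin m → ℕ) : ℝ :=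
  (∏ i, ((x i).choose (k i) : ℝ)) *
    betaFn ((∑ i, (k i : ℝ)) + α) ((∑ i, (x i : ℝ)) - (∑ i, (k i : ℝ)) + β) / betaFn α β

/-- Expectation of `f(Δ_1,…,Δ_m)` under the above joint distribution. -/
noncomputable def mbbExp (m : ℕ) (x : Fin m → ℕ) (α β : ℝ) (f : (Fin m → ℕ) → ℝ) : ℝ :=
  ∑ k ∈ Fintype.piFinset (fun i => Finset.range (x i + 1)), f k * mbbPmf m x α β k

/-- `π(h) = 1 − exp(−∫_t^{t+h} r(s) ds)`. -/
noncomputable def pih (r : ℝ → ℝ) (t h : ℝ) : ℝ :=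
  1 - Real.exp (-(∫ s in t..(t + h), r s))

/-!
Conditionally on `Π = p` the counts are independent binomials, so `E[Δ_i] = x_i E[Π]` and
`E[Δ_i Δ_j] = x_i x_j E[Π²]` for `i ≠ j`. The Beta moments then give
`Cov(Δ_i, Δ_j) = x_i x_j Var(Π) = x_i x_j π(1 - π)/(c + 1)`, and `π(h) = r(t) h + o(h)`.
-/

open MeasureTheory Set Polynomial Finset

lemma betaFn_pos {a b : ℝ} (ha : 0 < a) (hb : 0 < b) : 0 < betaFn a b :=
  ProbabilityTheory.beta_pos ha hb

lemma betaFn_add_one {a b : ℝ} (ha : 0 < a) (hb : 0 < b) :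
    betaFn (a + 1) b = a / (a + b) * betaFn a b := by
  have hab : 0 < a + b := add_pos ha hb
  rw [betaFn, betaFn, Real.Gamma_add_one ha.ne', add_right_comm, Real.Gamma_add_one hab.ne']
  have := (Real.Gamma_pos_of_pos hab).ne'
  field_simp

noncomputable def betaWeight (a b p : ℝ) : ℝ := p ^ (a - 1) * (1 - p) ^ (b - 1)

lemma intervalIntegral_zero_one_congr_Ioo {f g : ℝ → ℝ} (h : EqOn f g (Ioo 0 1)) :
    ∫ p in (0 : ℝ)..1, f p = ∫ p in (0 : ℝ)..1, g p := by
  simp only [intervalIntegral.integral_of_le zero_le_one, integral_Ioc_eq_integral_Ioo]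
  exact setIntegral_congr_fun measurableSet_Ioo h

lemma integral_betaWeight {a b : ℝ} (ha : 0 < a) (hb : 0 < b) :
    ∫ p in (0 : ℝ)..1, betaWeight a b p = betaFn a b := by
  have hcomplex : ((∫ p in (0 : ℝ)..1, betaWeight a b p : ℝ) : ℂ) = Complex.betaIntegral a b := by
    rw [← intervalIntegral.integral_ofReal]
    refine intervalIntegral.integral_congr fun p hp => ?_
    rw [Set.uIcc_of_le zero_le_one] at hp
    simp only [betaWeight, Complex.ofReal_mul]
    rw [Complex.ofReal_cpow hp.1, Complex.ofReal_cpow (sub_nonneg.2 hp.2)]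
    push_cast
    rfl
  rw [show betaFn a b = _ from ProbabilityTheory.beta_eq_betaIntegralReal a b ha hb, ← hcomplex,
    Complex.ofReal_re]

lemma integral_pow_mul_pow_mul_betaWeight {a b : ℝ} (ha : 0 < a) (hb : 0 < b) (n k : ℕ) :
    ∫ p in (0 : ℝ)..1, p ^ n * (1 - p) ^ k * betaWeight a b p = betaFn (a + n) (b + k) := by
  rw [← integral_betaWeight (by positivity) (by positivity)]
  refine intervalIntegral_zero_one_congr_Ioo fun p hp => ?_
  have hq : 0 < 1 - p := sub_pos.2 hp.2
  simp only [betaWeight, add_sub_right_comm _ (n : ℝ), add_sub_right_comm _ (k : ℝ),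
    Real.rpow_add_natCast hp.1.ne', Real.rpow_add_natCast hq.ne']
  ring

lemma intervalIntegrable_pow_mul_pow_mul_betaWeight {a b : ℝ} (ha : 0 < a) (hb : 0 < b)
    (n k : ℕ) :
    IntervalIntegrable (fun p => p ^ n * (1 - p) ^ k * betaWeight a b p) volume 0 1 :=
  intervalIntegral.intervalIntegrable_of_integral_ne_zero <| by
    rw [integral_pow_mul_pow_mul_betaWeight ha hb]
    exact (betaFn_pos (by positivity) (by positivity)).ne'

section Bernstein

variable {R : Type*} [CommRing R]

lemma sum_eval_bernsteinPolynomial (n : ℕ) (p : R) :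
    ∑ ν ∈ range (n + 1), (bernsteinPolynomial R n ν).eval p = 1 := by
  rw [← eval_finsetSum, bernsteinPolynomial.sum, eval_one]

lemma sum_mul_eval_bernsteinPolynomial (n : ℕ) (p : R) :
    ∑ ν ∈ range (n + 1), (ν : R) * (bernsteinPolynomial R n ν).eval p = n * p := by
  have := congrArg (eval p) (bernsteinPolynomial.sum_smul (R := R) n)
  simpa [eval_finsetSum, nsmul_eq_mul] using this

lemma prod_eval_bernsteinPolynomial {ι : Type*} [Fintype ι] (x k : ι → ℕ) (p : R) :
    ∏ l, (bernsteinPolynomial R (x l) (k l)).eval p =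
      (∏ l, ((x l).choose (k l) : R)) * (p ^ (∑ l, k l) * (1 - p) ^ (∑ l, (x l - k l))) := by
  simp only [bernsteinPolynomial, eval_mul, eval_pow, eval_sub, eval_one, eval_X, eval_natCast,
    prod_mul_distrib, prod_pow_eq_pow_sum]
  ring

lemma sum_piFinset_prod_mul_prod_eval_bernsteinPolynomial {ι : Type*} [Fintype ι]
    [DecidableEq ι] (x : ι → ℕ) (g : ι → ℕ → R) (p : R) :
    ∑ k ∈ Fintype.piFinset (fun l => range (x l + 1)),
        (∏ l, g l (k l)) * ∏ l, (bernsteinPolynomial R (x l) (k l)).eval p =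
      ∏ l, ∑ ν ∈ range (x l + 1), g l ν * (bernsteinPolynomial R (x l) ν).eval p := by
  simp_rw [← prod_mul_distrib]
  exact (prod_univ_sum (fun l => range (x l + 1))
    fun l ν => g l ν * (bernsteinPolynomial R (x l) ν).eval p).symm

end Bernstein

section Mixture

variable {m : ℕ} (x : Fin m → ℕ) {α β : ℝ}

lemma integral_prod_eval_bernsteinPolynomial_mul_betaWeight (hα : 0 < α) (hβ : 0 < β)
    (k : Fin m → ℕ) :
    ∫ p in (0 : ℝ)..1, (∏ l, (bernsteinPolynomial ℝ (x l) (k l)).eval p) * betaWeight α β p =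
      (∏ l, ((x l).choose (k l) : ℝ)) *
        betaFn (α + (∑ l, k l : ℕ)) (β + (∑ l, (x l - k l) : ℕ)) := by
  simp only [prod_eval_bernsteinPolynomial, mul_assoc (∏ l, ((x l).choose (k l) : ℝ)),
    intervalIntegral.integral_const_mul, integral_pow_mul_pow_mul_betaWeight hα hβ]

lemma intervalIntegrable_prod_eval_bernsteinPolynomial_mul_betaWeight (hα : 0 < α)
    (hβ : 0 < β) (k : Fin m → ℕ) :
    IntervalIntegrable
      (fun p => (∏ l, (bernsteinPolynomial ℝ (x l) (k l)).eval p) * betaWeight α β p)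
      volume 0 1 := by
  simp only [prod_eval_bernsteinPolynomial, mul_assoc (∏ l, ((x l).choose (k l) : ℝ))]
  exact (intervalIntegrable_pow_mul_pow_mul_betaWeight hα hβ _ _).const_mul _

lemma mbbPmf_eq_integral (hα : 0 < α) (hβ : 0 < β) {k : Fin m → ℕ} (hk : ∀ l, k l ≤ x l) :
    mbbPmf m x α β k =
      (∫ p in (0 : ℝ)..1, (∏ l, (bernsteinPolynomial ℝ (x l) (k l)).eval p) * betaWeight α β p) /
        betaFn α β := by
  rw [integral_prod_eval_bernsteinPolynomial_mul_betaWeight x hα hβ, mbbPmf, mul_div_assoc,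
    mul_div_assoc]
  congr 3
  · push_cast
    ring
  · push_cast [Nat.cast_sub (hk _), sum_sub_distrib]
    ring

/-- Conditioning on `Π = p`: the binomial point masses are the Bernstein polynomials at `p`. -/
lemma mbbExp_eq_integral (hα : 0 < α) (hβ : 0 < β) (f : (Fin m → ℕ) → ℝ) :
    mbbExp m x α β f =
      (∫ p in (0 : ℝ)..1, (∑ k ∈ Fintype.piFinset (fun l => range (x l + 1)),
        f k * ∏ l, (bernsteinPolynomial ℝ (x l) (k l)).eval p) * betaWeight α β p) /
        betaFn α β := by
  have hle : ∀ k ∈ Fintype.piFinset (fun l => range (x l + 1)), ∀ l, k l ≤ x l :=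
    fun k hk l => Nat.lt_succ_iff.1 (mem_range.1 (Fintype.mem_piFinset.1 hk l))
  simp_rw [sum_mul, mul_assoc]
  rw [intervalIntegral.integral_finsetSum fun k _ =>
      (intervalIntegrable_prod_eval_bernsteinPolynomial_mul_betaWeight x hα hβ k).const_mul _,
    mbbExp, sum_div]
  refine sum_congr rfl fun k hk => ?_
  rw [mbbPmf_eq_integral x hα hβ (hle k hk), intervalIntegral.integral_const_mul, mul_div_assoc]

end Mixture

section Moments

variable {m : ℕ} (x : Fin m → ℕ) {α β : ℝ}

lemma mbbExp_prod_eq (hα : 0 < α) (hβ : 0 < β) (s : Finset (Fin m)) :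
    mbbExp m x α β (fun k => ∏ l ∈ s, (k l : ℝ)) =
      (∏ l ∈ s, (x l : ℝ)) * (betaFn (α + #s) β / betaFn α β) := by
  classical
  have hconditional : ∀ (p : ℝ) (l : Fin m),
      ∑ ν ∈ range (x l + 1), (if l ∈ s then (ν : ℝ) else 1) *
          (bernsteinPolynomial ℝ (x l) ν).eval p =
        if l ∈ s then (x l : ℝ) * p else 1 := by
    intro p l
    split_ifs
    · exact sum_mul_eval_bernsteinPolynomial _ p
    · simpa using sum_eval_bernsteinPolynomial (x l) p
  have hintegrand : ∀ p : ℝ, ∑ k ∈ Fintype.piFinset (fun l => range (x l + 1)),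
      (∏ l ∈ s, (k l : ℝ)) * ∏ l, (bernsteinPolynomial ℝ (x l) (k l)).eval p =
        (∏ l ∈ s, (x l : ℝ)) * p ^ #s := by
    intro p
    have h := sum_piFinset_prod_mul_prod_eval_bernsteinPolynomial x
      (fun l ν => if l ∈ s then (ν : ℝ) else 1) p
    simp only [Fintype.prod_ite_mem] at h
    rw [h, prod_congr rfl fun l _ => hconditional p l, Fintype.prod_ite_mem, prod_mul_distrib,
      prod_const]
  have hmoment := integral_pow_mul_pow_mul_betaWeight hα hβ #s 0
  simp only [pow_zero, mul_one, Nat.cast_zero, add_zero] at hmoment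
  simp only [mbbExp_eq_integral x hα hβ, hintegrand, mul_assoc,
    intervalIntegral.integral_const_mul, hmoment, mul_div_assoc]

lemma betaFn_add_two {a b : ℝ} (ha : 0 < a) (hb : 0 < b) :
    betaFn (a + 2) b = (a + 1) / (a + b + 1) * (a / (a + b) * betaFn a b) := by
  rw [show a + 2 = a + 1 + 1 by ring, betaFn_add_one (by positivity) hb, betaFn_add_one ha hb,
    add_right_comm]

lemma mbbExp_coord (hα : 0 < α) (hβ : 0 < β) (i : Fin m) :
    mbbExp m x α β (fun k => (k i : ℝ)) = x i * (α / (α + β)) := by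
  have := mbbExp_prod_eq x hα hβ {i}
  simp only [Finset.prod_singleton, Finset.card_singleton, Nat.cast_one,
    betaFn_add_one hα hβ] at this
  have hB := (betaFn_pos hα hβ).ne'
  rw [this]
  field_simp

lemma mbbExp_coord_mul_coord (hα : 0 < α) (hβ : 0 < β) {i j : Fin m} (hij : i ≠ j) :
    mbbExp m x α β (fun k => (k i : ℝ) * (k j : ℝ)) =
      x i * x j * ((α + 1) / (α + β + 1) * (α / (α + β))) := by
  have := mbbExp_prod_eq x hα hβ {i, j}
  simp only [prod_pair hij, card_pair hij, Nat.cast_two, betaFn_add_two hα hβ] at this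
  have hB := (betaFn_pos hα hβ).ne'
  rw [this]
  field_simp

lemma mbbExp_covariance (hα : 0 < α) (hβ : 0 < β) {i j : Fin m} (hij : i ≠ j) :
    mbbExp m x α β (fun k => (k i : ℝ) * (k j : ℝ)) -
        mbbExp m x α β (fun k => (k i : ℝ)) * mbbExp m x α β (fun k => (k j : ℝ)) =
      x i * x j * (α * β / ((α + β) ^ 2 * (α + β + 1))) := by
  rw [mbbExp_coord_mul_coord x hα hβ hij, mbbExp_coord x hα hβ, mbbExp_coord x hα hβ]
  have : α + β ≠ 0 := by positivity
  have : α + β + 1 ≠ 0 := by positivity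
  field_simp
  ring

end Moments

section Pih

variable {r : ℝ → ℝ} (t : ℝ)

lemma pih_mem_Ioo (hr_cont : Continuous r) (hr_pos : ∀ s, 0 < r s) {h : ℝ} (hh : 0 < h) :
    pih r t h ∈ Set.Ioo 0 1 := by
  have hI : 0 < ∫ s in t..(t + h), r s :=
    intervalIntegral.intervalIntegral_pos_of_pos (hr_cont.intervalIntegrable _ _) hr_pos
      (lt_add_of_pos_right t hh)
  exact ⟨sub_pos.2 (Real.exp_lt_one_iff.2 (neg_lt_zero.2 hI)), sub_lt_self _ (Real.exp_pos _)⟩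

lemma pih_zero : pih r t 0 = 0 := by
  simp [pih]

lemma hasDerivAt_pih (hr_cont : Continuous r) : HasDerivAt (pih r t) (r t) 0 := by
  have hintegral : HasDerivAt (fun h => ∫ s in t..(t + h), r s) (r t) 0 :=
    HasDerivAt.comp_const_add t 0
      (by simpa using (hr_cont.integral_hasStrictDerivAt t t).hasDerivAt)
  have hpih := (hintegral.fun_neg.exp).const_sub 1
  rw [add_zero, intervalIntegral.integral_same, neg_zero, Real.exp_zero, one_mul, neg_neg] at hpih
  exact hpih

lemma tendsto_inv_mul_pih (hr_cont : Continuous r) :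
    Tendsto (fun h => h⁻¹ * pih r t h) (𝓝[>] 0) (𝓝 (r t)) := by
  simpa [pih_zero] using (hasDerivAt_pih t hr_cont).tendsto_slope_zero_right

lemma tendsto_pih (hr_cont : Continuous r) : Tendsto (pih r t) (𝓝[>] 0) (𝓝 0) := by
  simpa [pih_zero] using
    (hasDerivAt_pih t hr_cont).continuousAt.tendsto.mono_left nhdsWithin_le_nhds

end Pih

theorem mbb_infinitesimal_covariance_general
    (r : ℝ → ℝ) (hr_cont : Continuous r) (hr_pos : ∀ s, 0 < r s)
    (t c : ℝ) (hc : 0 < c) (m₁ : ℕ)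
    (x : Fin m₁ → ℕ) (hx : ∀ i, 1 ≤ x i) (i j : Fin m₁) (hij : i ≠ j) :
    Tendsto (fun h : ℝ => h⁻¹ *
        (mbbExp m₁ x (c * pih r t h) (c * (1 - pih r t h))
            (fun k => (k i : ℝ) * (k j : ℝ))
          - mbbExp m₁ x (c * pih r t h) (c * (1 - pih r t h)) (fun k => (k i : ℝ))
            * mbbExp m₁ x (c * pih r t h) (c * (1 - pih r t h)) (fun k => (k j : ℝ))))
      (𝓝[>] (0 : ℝ)) (𝓝 ((x i : ℝ) * (x j : ℝ) * r t / (c + 1))) ∧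
    0 < (x i : ℝ) * (x j : ℝ) * r t / (c + 1) := by
  have hxi : (0 : ℝ) < x i := Nat.cast_pos.2 (hx i)
  have hxj : (0 : ℝ) < x j := Nat.cast_pos.2 (hx j)
  refine ⟨?_, by have := hr_pos t; positivity⟩
  have hlim : Tendsto (fun h => (x i * x j / (c + 1)) * (h⁻¹ * pih r t h) * (1 - pih r t h))
      (𝓝[>] 0) (𝓝 ((x i * x j / (c + 1)) * r t * (1 - 0))) :=
    ((tendsto_inv_mul_pih t hr_cont).const_mul _).mul ((tendsto_pih t hr_cont).const_sub 1)
  rw [show (x i * x j / (c + 1)) * r t * (1 - 0) = (x i : ℝ) * x j * r t / (c + 1) by ring] at hlim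
  refine hlim.congr' (eventually_nhdsWithin_of_forall fun h (hh : 0 < h) => ?_)
  obtain ⟨hπ0, hπ1⟩ := pih_mem_Ioo t hr_cont hr_pos hh
  dsimp only
  rw [mbbExp_covariance x (mul_pos hc hπ0) (mul_pos hc (sub_pos.2 hπ1)) hij]
  field_simp
  ring

/-- with `Π_h ~ Beta(cπ(h), c(1−π(h)))` and, conditionally on `Π_h`,
independent `Δ_i^h ~ Binomial(x_i, Π_h)` for `i = 1,…,m₁`, for all `i ≠ j`:
`lim_{h→0+} h⁻¹ Cov(Δ_i^h, Δ_j^h) = x_i x_j r(t)/(c+1) > 0`. -/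
theorem mbb_infinitesimal_covariance
    (r : ℝ → ℝ) (hr_cont : Continuous r) (hr_pos : ∀ s, 0 < r s)
    (t c : ℝ) (hc : 0 < c) (m₁ : ℕ) (hm : 2 ≤ m₁)
    (x : Fin m₁ → ℕ) (hx : ∀ i, 1 ≤ x i) (i j : Fin m₁) (hij : i ≠ j) :
    Tendsto (fun h : ℝ => h⁻¹ *
        (mbbExp m₁ x (c * pih r t h) (c * (1 - pih r t h))
            (fun k => (k i : ℝ) * (k j : ℝ))
          - mbbExp m₁ x (c * pih r t h) (c * (1 - pih r t h)) (fun k => (k i : ℝ))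
            * mbbExp m₁ x (c * pih r t h) (c * (1 - pih r t h)) (fun k => (k j : ℝ))))
      (𝓝[>] (0 : ℝ)) (𝓝 ((x i : ℝ) * (x j : ℝ) * r t / (c + 1))) ∧
    0 < (x i : ℝ) * (x j : ℝ) * r t / (c + 1) :=
  mbb_infinitesimal_covariance_general r hr_cont hr_pos t c hc m₁ x hx i j hij
end
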